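/- arXiv:1412.1691 — 5 statements merged into one kernel-verified Lean document; each statement's English description precedes it below -/
import Mathlib

section
/- Let X be a D-hyperbolic geodesic metric space with basepoint pt, and define H : X × ℕ → X by H(x,n) = γ_x(n), where γ_x is a geodesic from x to pt extended to be constantly pt beyond d(x,pt). Then for all (x,m), (y,n) in X × ℕ with d(x,y) ≤ R and |m − n| ≤ R, one has d(H(x,m), H(y,n)) ≤ 4D + 2R. -/
/-!
Fix `s ≥ 0` and write `p = γ x s`. If `s ≥ dist x pt` then `p = pt`, and `γ y s` is within
`dist x y` of `pt`. Otherwise `p` lies on the side `[x, pt]` of a geodesic triangle `x, y, pt`,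
so it is `D`-close to a point of `[x, y]` or of `[y, pt]`; comparing distances to `x` resp. `pt`
shows in both cases that `dist (γ x s) (γ y s) ≤ 2 D + dist x y`. The theorem follows from this
and the 1-Lipschitz property of `γ y`.
-/

/-- A geodesic segment from `a` to `b`, parametrized by arclength on `[0, dist a b]`. -/
def GeodesicFrom {X : Type*} [MetricSpace X] (γ : ℝ → X) (a b : X) : Prop :=
  γ 0 = a ∧ γ (dist a b) = b ∧
    ∀ s ∈ Set.Icc 0 (dist a b), ∀ t ∈ Set.Icc 0 (dist a b), dist (γ s) (γ t) = |s - t|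

/-- A geodesic metric space: any two points are joined by a geodesic segment. -/
def GeodesicSpace (X : Type*) [MetricSpace X] : Prop :=
  ∀ a b : X, ∃ γ : ℝ → X, GeodesicFrom γ a b

/-- `X` is `D`-hyperbolic: every geodesic triangle is `D`-slim. -/
def Hyperbolic (X : Type*) [MetricSpace X] (D : ℝ) : Prop :=
  ∀ x y z : X, ∀ γxy γxz γyz : ℝ → X,
    GeodesicFrom γxy x y → GeodesicFrom γxz x z → GeodesicFrom γyz y z →
    ∀ s ∈ Set.Icc (0:ℝ) (dist x y),
      (∃ t ∈ Set.Icc (0:ℝ) (dist x z), dist (γxy s) (γxz t) ≤ D) ∨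
      (∃ t ∈ Set.Icc (0:ℝ) (dist y z), dist (γxy s) (γyz t) ≤ D)

open Set

namespace GeodesicFrom

variable {X : Type*} [MetricSpace X] {γ : ℝ → X} {a b : X} {s t : ℝ}

lemma dist_start_apply (hγ : GeodesicFrom γ a b) (hs : s ∈ Icc 0 (dist a b)) :
    dist a (γ s) = s := by
  rw [← hγ.1, hγ.2.2 0 ⟨le_rfl, dist_nonneg⟩ s hs, zero_sub, abs_neg, abs_of_nonneg hs.1]

lemma dist_apply_end (hγ : GeodesicFrom γ a b) (hs : s ∈ Icc 0 (dist a b)) :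
    dist (γ s) b = dist a b - s := by
  conv_lhs => rw [← hγ.2.1]
  rw [hγ.2.2 s hs _ ⟨dist_nonneg, le_rfl⟩, abs_sub_comm, abs_of_nonneg (sub_nonneg.2 hs.2)]

lemma reverse (hγ : GeodesicFrom γ a b) : GeodesicFrom (fun t => γ (dist a b - t)) b a := by
  refine ⟨by simpa using hγ.2.1, by simpa [dist_comm b a] using hγ.1, ?_⟩
  intro u hu v hv
  rw [dist_comm b a] at hu hv
  rw [hγ.2.2 _ ⟨by linarith [hu.2], by linarith [hu.1]⟩ _ ⟨by linarith [hv.2], by linarith [hv.1]⟩,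
    sub_sub_sub_cancel_left, abs_sub_comm]

lemma dist_apply_le_abs_sub (hγ : GeodesicFrom γ a b) (hext : ∀ t, dist a b ≤ t → γ t = b)
    (hs : 0 ≤ s) (ht : 0 ≤ t) : dist (γ s) (γ t) ≤ |s - t| := by
  wlog hst : s ≤ t generalizing s t
  · rw [dist_comm, abs_sub_comm]
    exact this ht hs (le_of_not_ge hst)
  rcases le_total t (dist a b) with htd | hdt
  · exact (hγ.2.2 s ⟨hs, hst.trans htd⟩ t ⟨ht, htd⟩).le
  rcases le_total s (dist a b) with hsd | hds
  · rw [hext t hdt, hγ.dist_apply_end ⟨hs, hsd⟩, abs_sub_comm, abs_of_nonneg (sub_nonneg.2 hst)]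
    linarith
  · rw [hext s hds, hext t hdt, dist_self]
    exact abs_nonneg _

lemma dist_start_apply_le (hγ : GeodesicFrom γ a b) (hext : ∀ t, dist a b ≤ t → γ t = b)
    (hs : 0 ≤ s) : dist a (γ s) ≤ s := by
  simpa [hγ.1, abs_of_nonneg hs] using hγ.dist_apply_le_abs_sub hext le_rfl hs

end GeodesicFrom

section FellowTravel

variable {X : Type*} [MetricSpace X] {D s : ℝ} {x y pt : X} {γx γy : ℝ → X}

lemma fellow_travel_of_dist_le (hy : GeodesicFrom γy y pt)
    (hxext : ∀ t, dist x pt ≤ t → γx t = pt) (hyext : ∀ t, dist y pt ≤ t → γy t = pt)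
    (hs : dist x pt ≤ s) : dist (γx s) (γy s) ≤ dist x y := by
  rw [hxext s hs]
  rcases le_total (dist y pt) s with hys | hsy
  · rw [hyext s hys, dist_self]
    exact dist_nonneg
  · rw [dist_comm, hy.dist_apply_end ⟨(dist_nonneg).trans hs, hsy⟩]
    linarith [dist_triangle_left y pt x]

lemma fellow_travel_of_close_to_chord {σ : ℝ → X} {t : ℝ}
    (hx : GeodesicFrom γx x pt) (hσ : GeodesicFrom σ x y) (hy : GeodesicFrom γy y pt)
    (hyext : ∀ t, dist y pt ≤ t → γy t = pt) (hs : s ∈ Icc 0 (dist x pt))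
    (ht : t ∈ Icc 0 (dist x y)) (hclose : dist (γx s) (σ t) ≤ D) :
    dist (γx s) (γy s) ≤ 2 * D + dist x y := by
  have hst : s ≤ t + D := by
    calc s = dist x (γx s) := (hx.dist_start_apply hs).symm
      _ ≤ dist x (σ t) + dist (γx s) (σ t) := dist_triangle_right _ _ _
      _ ≤ t + D := by rw [hσ.dist_start_apply ht]; linarith
  calc dist (γx s) (γy s) ≤ dist (γx s) (σ t) + dist (σ t) y + dist y (γy s) :=
        dist_triangle4 _ _ _ _
    _ ≤ D + (dist x y - t) + s := by
        rw [hσ.dist_apply_end ht]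
        linarith [hy.dist_start_apply_le hyext hs.1]
    _ ≤ 2 * D + dist x y := by linarith

lemma fellow_travel_of_close_to_side {u : ℝ}
    (hx : GeodesicFrom γx x pt) (hy : GeodesicFrom γy y pt)
    (hyext : ∀ t, dist y pt ≤ t → γy t = pt) (hs : s ∈ Icc 0 (dist x pt))
    (hu : u ∈ Icc 0 (dist y pt)) (hclose : dist (γx s) (γy u) ≤ D) :
    dist (γx s) (γy s) ≤ 2 * D + dist x y := by
  have hpt : |(dist x pt - s) - (dist y pt - u)| ≤ D := by
    rw [← hx.dist_apply_end hs, ← hy.dist_apply_end hu]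
    exact (abs_dist_sub_le _ _ _).trans hclose
  have hus : |u - s| ≤ D + dist x y := by
    calc |u - s| = |((dist x pt - s) - (dist y pt - u)) - (dist x pt - dist y pt)| := by
          ring_nf
      _ ≤ |(dist x pt - s) - (dist y pt - u)| + |dist x pt - dist y pt| := abs_sub _ _
      _ ≤ D + dist x y := add_le_add hpt (abs_dist_sub_le _ _ _)
  calc dist (γx s) (γy s) ≤ dist (γx s) (γy u) + dist (γy u) (γy s) := dist_triangle _ _ _
    _ ≤ D + (D + dist x y) := add_le_add hclose
        ((hy.dist_apply_le_abs_sub hyext hu.1 hs.1).trans hus)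
    _ = 2 * D + dist x y := by ring

lemma fellow_travel (hD : 0 ≤ D) (hgeo : GeodesicSpace X) (hhyp : Hyperbolic X D)
    (hx : GeodesicFrom γx x pt) (hy : GeodesicFrom γy y pt)
    (hxext : ∀ t, dist x pt ≤ t → γx t = pt) (hyext : ∀ t, dist y pt ≤ t → γy t = pt)
    (hs : 0 ≤ s) : dist (γx s) (γy s) ≤ 2 * D + dist x y := by
  rcases le_total (dist x pt) s with hxs | hsx
  · linarith [fellow_travel_of_dist_le hy hxext hyext hxs]
  obtain ⟨σ, hσ⟩ := hgeo x y
  rcases hhyp x pt y γx σ _ hx hσ hy.reverse s ⟨hs, hsx⟩ with ⟨t, ht, hclose⟩ | ⟨t, ht, hclose⟩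
  · exact fellow_travel_of_close_to_chord hx hσ hy hyext ⟨hs, hsx⟩ ht hclose
  · rw [dist_comm pt y] at ht
    exact fellow_travel_of_close_to_side hx hy hyext ⟨hs, hsx⟩
      ⟨by linarith [ht.2], by linarith [ht.1]⟩ hclose

end FellowTravel

theorem stmt1_general {X : Type*} [MetricSpace X] (D : ℝ) (hD : 0 ≤ D)
    (hgeo : GeodesicSpace X) (hhyp : Hyperbolic X D)
    (pt : X) (γ : X → ℝ → X)
    (hγ : ∀ x, GeodesicFrom (γ x) x pt)
    (hext : ∀ x : X, ∀ t : ℝ, dist x pt ≤ t → γ x t = pt)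
    (H : X → ℕ → X) (hH : ∀ x n, H x n = γ x n)
    (R : ℝ) (x y : X) (hxy : dist x y ≤ R)
    (m n : ℕ) (hmn : |(m : ℝ) - (n : ℝ)| ≤ R) :
    dist (H x m) (H y n) ≤ 4 * D + 2 * R := by
  rw [hH, hH]
  have htravel : dist (γ x m) (γ y m) ≤ 2 * D + dist x y :=
    fellow_travel hD hgeo hhyp (hγ x) (hγ y) (hext x) (hext y) m.cast_nonneg
  have hlip : dist (γ y m) (γ y n) ≤ |(m : ℝ) - n| :=
    (hγ y).dist_apply_le_abs_sub (hext y) m.cast_nonneg n.cast_nonneg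
  linarith [dist_triangle (γ x m) (γ y m) (γ y n)]

/-- For `H (x, n) = γ x n` with `γ x` a geodesic from `x` to `pt` (extended constantly by
`pt` beyond `dist x pt`) in a `D`-hyperbolic geodesic space: if `dist x y ≤ R` and
`|m - n| ≤ R` then `dist (H x m) (H y n) ≤ 4 D + 2 R`. -/
theorem stmt1 {X : Type*} [MetricSpace X] (D : ℝ) (hD : 0 ≤ D)
    (hgeo : GeodesicSpace X) (hhyp : Hyperbolic X D)
    (pt : X) (γ : X → ℝ → X)
    (hγ : ∀ x, GeodesicFrom (γ x) x pt)
    (hext : ∀ x : X, ∀ t : ℝ, dist x pt ≤ t → γ x t = pt)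
    (H : X → ℕ → X) (hH : ∀ x n, H x n = γ x n)
    (R : ℝ) (hR : 0 ≤ R) (x y : X) (hxy : dist x y ≤ R)
    (m n : ℕ) (hmn : |(m : ℝ) - (n : ℝ)| ≤ R) :
    dist (H x m) (H y n) ≤ 4 * D + 2 * R :=
  stmt1_general D hD hgeo hhyp pt γ hγ hext H hH R x y hxy m n hmn
end

section
/- Let Y be a compact metric space embedded in the unit sphere of a real Hilbert space H, and let OY ⊆ H be the union of all rays from the origin through points of Y (the open cone on Y), with the subspace metric. Define H : OY × ℕ → OY by H(t·y, n) = max(t − n, 0)·y for y ∈ Y, t ≥ 0. Then H((0,·)) is the cone point 0; H(x,0) = x for all x; for every bounded B ⊆ OY there is N with H(x,n) = 0 for all x ∈ B and n ≥ N; and for all x₁ = t₁·y₁, x₂ = t₂·y₂ in OY with ‖x₁ − x₂‖ ≤ R and m, n ∈ ℕ with |m − n| ≤ R, one has ‖H(x₁,m) − H(x₂,n)‖ ≤ 2R. -/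
/-!
Writing a point of the cone as `t • y` with `‖y‖ = 1`, the map is `t • y ↦ max (t - n) 0 • y`.
Changing the time from `m` to `n` moves a point along its ray by at most `|m - n|`.
At a fixed time, lowering both radii without increasing their difference does not increase
distances: expanding `‖a • y₁ - b • y₂‖² = (a - b)² + 2ab(1 - ⟪y₁, y₂⟫)` shows that both terms
can only shrink. The triangle inequality through `H(x₂, m)` then gives the bound `R + R`.
-/

noncomputable def radialContraction {E : Type*} [SeminormedAddCommGroup E] [NormedSpace ℝ E]
    (x : E) (s : ℝ) : E :=
  (max (‖x‖ - s) 0 / ‖x‖) • x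

section NormedSpace

variable {E : Type*} [NormedAddCommGroup E] [NormedSpace ℝ E]

@[simp]
theorem radialContraction_zero_left (s : ℝ) : radialContraction (0 : E) s = 0 := by
  simp [radialContraction]

@[simp]
theorem radialContraction_zero_right (x : E) : radialContraction x 0 = x := by
  rcases eq_or_ne x 0 with rfl | hx
  · simp
  · rw [radialContraction, sub_zero, max_eq_left (norm_nonneg x),
      div_self (norm_ne_zero_iff.mpr hx), one_smul]

theorem radialContraction_eq_zero_of_norm_le {x : E} {s : ℝ} (h : ‖x‖ ≤ s) :
    radialContraction x s = 0 := by
  rw [radialContraction, max_eq_right (sub_nonpos.mpr h), zero_div, zero_smul]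

theorem radialContraction_smul_of_norm_eq_one {y : E} (hy : ‖y‖ = 1) {t s : ℝ} (ht : 0 ≤ t)
    (hs : 0 ≤ s) : radialContraction (t • y) s = max (t - s) 0 • y := by
  rcases ht.eq_or_lt with rfl | ht
  · simp [hs]
  · rw [radialContraction, norm_smul, hy, mul_one, Real.norm_of_nonneg ht.le, smul_smul,
      div_mul_cancel₀ _ ht.ne']

theorem norm_radialContraction_sub_radialContraction_le (x : E) (s s' : ℝ) :
    ‖radialContraction x s - radialContraction x s'‖ ≤ |s - s'| := by
  rcases eq_or_ne x 0 with rfl | hx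
  · simp
  have hx' : ‖x‖ ≠ 0 := norm_ne_zero_iff.mpr hx
  rw [radialContraction, radialContraction, ← sub_smul, norm_smul, ← sub_div, norm_div,
    Real.norm_eq_abs, norm_norm, div_mul_cancel₀ _ hx']
  calc |max (‖x‖ - s) 0 - max (‖x‖ - s') 0| ≤ |(‖x‖ - s) - (‖x‖ - s')| :=
        abs_max_sub_max_le_abs _ _ _
    _ = |s - s'| := by rw [sub_sub_sub_cancel_left, abs_sub_comm]

end NormedSpace

section InnerProductSpace

variable {E : Type*} [NormedAddCommGroup E] [InnerProductSpace ℝ E]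

theorem norm_smul_sub_smul_sq_of_norm_eq_one {y₁ y₂ : E} (hy₁ : ‖y₁‖ = 1) (hy₂ : ‖y₂‖ = 1)
    (a b : ℝ) : ‖a • y₁ - b • y₂‖ ^ 2 = (a - b) ^ 2 + 2 * (a * b) * (1 - inner ℝ y₁ y₂) := by
  rw [norm_sub_sq_real, real_inner_smul_left, real_inner_smul_right, norm_smul, norm_smul, hy₁,
    hy₂, Real.norm_eq_abs, Real.norm_eq_abs, mul_one, mul_one, sq_abs, sq_abs]
  ring

theorem norm_smul_sub_smul_le_norm_smul_sub_smul {y₁ y₂ : E} (hy₁ : ‖y₁‖ = 1) (hy₂ : ‖y₂‖ = 1)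
    {a b a' b' : ℝ} (ha' : 0 ≤ a') (hb' : 0 ≤ b') (ha : a' ≤ a) (hb : b' ≤ b)
    (hab : |a' - b'| ≤ |a - b|) : ‖a' • y₁ - b' • y₂‖ ≤ ‖a • y₁ - b • y₂‖ := by
  have hinner : inner ℝ y₁ y₂ ≤ 1 := by
    simpa [hy₁, hy₂] using real_inner_le_norm y₁ y₂
  have hprod : a' * b' ≤ a * b := mul_le_mul ha hb hb' (ha'.trans ha)
  refine (sq_le_sq₀ (norm_nonneg _) (norm_nonneg _)).mp ?_
  rw [norm_smul_sub_smul_sq_of_norm_eq_one hy₁ hy₂, norm_smul_sub_smul_sq_of_norm_eq_one hy₁ hy₂]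
  have hcos : 0 ≤ 1 - inner ℝ y₁ y₂ := sub_nonneg.mpr hinner
  exact add_le_add (sq_le_sq.mpr hab) (by gcongr)

theorem norm_radialContraction_smul_sub_radialContraction_smul_le {y₁ y₂ : E} (hy₁ : ‖y₁‖ = 1)
    (hy₂ : ‖y₂‖ = 1) {t₁ t₂ s : ℝ} (ht₁ : 0 ≤ t₁) (ht₂ : 0 ≤ t₂) (hs : 0 ≤ s) :
    ‖radialContraction (t₁ • y₁) s - radialContraction (t₂ • y₂) s‖ ≤ ‖t₁ • y₁ - t₂ • y₂‖ := by
  rw [radialContraction_smul_of_norm_eq_one hy₁ ht₁ hs,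
    radialContraction_smul_of_norm_eq_one hy₂ ht₂ hs]
  refine norm_smul_sub_smul_le_norm_smul_sub_smul hy₁ hy₂ (le_max_right _ _) (le_max_right _ _)
    (max_le (by linarith) ht₁) (max_le (by linarith) ht₂) ?_
  calc |max (t₁ - s) 0 - max (t₂ - s) 0| ≤ |(t₁ - s) - (t₂ - s)| := abs_max_sub_max_le_abs _ _ _
    _ = |t₁ - t₂| := by rw [sub_sub_sub_cancel_right]

end InnerProductSpace

theorem stmt3_general {E : Type*} [NormedAddCommGroup E] [InnerProductSpace ℝ E]
    (Y : Set E) (hYsph : Y ⊆ Metric.sphere (0 : E) 1)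
    (OY : Set E)
    (Hc : E → ℕ → E) (hHc : ∀ x n, Hc x n = (max (‖x‖ - (n : ℝ)) 0 / ‖x‖) • x) :
    (∀ n, Hc 0 n = 0) ∧
    (∀ x ∈ OY, Hc x 0 = x) ∧
    (∀ B ⊆ OY, Bornology.IsBounded B → ∃ N : ℕ, ∀ x ∈ B, ∀ n ≥ N, Hc x n = 0) ∧
    (∀ R : ℝ, ∀ t₁ t₂ : ℝ, 0 ≤ t₁ → 0 ≤ t₂ → ∀ y₁ ∈ Y, ∀ y₂ ∈ Y,
      ‖t₁ • y₁ - t₂ • y₂‖ ≤ R → ∀ m n : ℕ, |(m : ℝ) - (n : ℝ)| ≤ R →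
      ‖Hc (t₁ • y₁) m - Hc (t₂ • y₂) n‖ ≤ 2 * R) := by
  obtain rfl : Hc = fun x (n : ℕ) => radialContraction x n := funext₂ hHc
  refine ⟨fun n => radialContraction_zero_left _, fun x _ => by simp, ?_, ?_⟩
  · intro B _ hB
    obtain ⟨C, hC⟩ := hB.exists_norm_le
    exact ⟨⌈C⌉₊, fun x hx n hn => radialContraction_eq_zero_of_norm_le <|
      (hC x hx).trans <| (Nat.le_ceil C).trans <| Nat.cast_le.mpr hn⟩
  · intro R t₁ t₂ ht₁ ht₂ y₁ hy₁ y₂ hy₂ hR m n hmn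
    have hy₁' : ‖y₁‖ = 1 := by simpa using hYsph hy₁
    have hy₂' : ‖y₂‖ = 1 := by simpa using hYsph hy₂
    calc ‖radialContraction (t₁ • y₁) m - radialContraction (t₂ • y₂) n‖
        ≤ ‖radialContraction (t₁ • y₁) m - radialContraction (t₂ • y₂) m‖
          + ‖radialContraction (t₂ • y₂) m - radialContraction (t₂ • y₂) n‖ :=
          norm_sub_le_norm_sub_add_norm_sub _ _ _
      _ ≤ R + R := add_le_add
          ((norm_radialContraction_smul_sub_radialContraction_smul_le hy₁' hy₂' ht₁ ht₂
            m.cast_nonneg).trans hR)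
          ((norm_radialContraction_sub_radialContraction_le _ _ _).trans hmn)
      _ = 2 * R := by ring

/-- Let `Y` be a compact subset of the unit sphere of a real Hilbert space `E` and
`OY = {t • y | t ≥ 0, y ∈ Y}` the open cone on `Y`.  The radial contraction
`Hc x n = (max (‖x‖ - n) 0 / ‖x‖) • x` (i.e. `t•y ↦ max (t-n) 0 • y`) fixes the cone
point `0`, is the identity at time `0`, eventually collapses every bounded subset of the
cone to `0`, and satisfies `‖Hc x₁ m - Hc x₂ n‖ ≤ 2R` whenever `‖x₁ - x₂‖ ≤ R` and
`|m - n| ≤ R`. -/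
theorem stmt3 {E : Type*} [NormedAddCommGroup E] [InnerProductSpace ℝ E] [CompleteSpace E]
    (Y : Set E) (hYcp : IsCompact Y) (hYsph : Y ⊆ Metric.sphere (0 : E) 1)
    (OY : Set E) (hOY : OY = {x | ∃ t : ℝ, 0 ≤ t ∧ ∃ y ∈ Y, x = t • y})
    (Hc : E → ℕ → E) (hHc : ∀ x n, Hc x n = (max (‖x‖ - (n : ℝ)) 0 / ‖x‖) • x) :
    (∀ n, Hc 0 n = 0) ∧
    (∀ x ∈ OY, Hc x 0 = x) ∧
    (∀ B ⊆ OY, Bornology.IsBounded B → ∃ N : ℕ, ∀ x ∈ B, ∀ n ≥ N, Hc x n = 0) ∧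
    (∀ R : ℝ, ∀ t₁ t₂ : ℝ, 0 ≤ t₁ → 0 ≤ t₂ → ∀ y₁ ∈ Y, ∀ y₂ ∈ Y,
      ‖t₁ • y₁ - t₂ • y₂‖ ≤ R → ∀ m n : ℕ, |(m : ℝ) - (n : ℝ)| ≤ R →
      ‖Hc (t₁ • y₁) m - Hc (t₂ • y₂) n‖ ≤ 2 * R) :=
  stmt3_general Y hYsph OY Hc hHc
end

section
/- Let Z be a countably generated discrete coarse space with generating entourages E₀ ⊆ E₁ ⊆ ⋯, and let H : Z × ℕ → Z be a coarse contraction to pt ∈ Z. Define H_n : P_Z → P_Z as the pushforward of finitely supported probability measures along z ↦ H(z,n), where P_{Z,n} = {μ : supp μ × supp μ ⊆ E_n}. Then for every n there is m ≥ n such that for all j ∈ ℕ and s ∈ [0,1] and μ ∈ P_{Z,n}, the measure (1−s)·H_j(μ) + s·H_{j+1}(μ) lies in P_{Z,m}. -/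
/-! The support of `(1-s) H_j μ + s H_{j+1} μ` lies in `H (supp μ × {j, j+1})`, so its square
lies in the image under `H × H` of the entourage `E n × {|k - l| ≤ 1}` of `Z × ℕ`. That image
is an entourage not depending on `j`, `s` or `μ`, hence it is contained in a single `E m`. -/

/-- A coarse structure on a set `X`: a collection of subsets of `X × X` (entourages)
containing the diagonal and all finite sets, closed under subsets, inverses,
composition and finite unions. -/
structure CoarseStruct (X : Type*) where
  ents : Set (Set (X × X))
  diag_mem : {p : X × X | p.1 = p.2} ∈ ents
  subset_mem : ∀ E ∈ ents, ∀ E' ⊆ E, E' ∈ ents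
  inv_mem : ∀ E ∈ ents, {p : X × X | (p.2, p.1) ∈ E} ∈ ents
  comp_mem : ∀ E₁ ∈ ents, ∀ E₂ ∈ ents,
    {p : X × X | ∃ y, (p.1, y) ∈ E₁ ∧ (y, p.2) ∈ E₂} ∈ ents
  union_mem : ∀ E₁ ∈ ents, ∀ E₂ ∈ ents, E₁ ∪ E₂ ∈ ents
  finite_mem : ∀ E : Set (X × X), E.Finite → E ∈ ents

/-- Composition of relations: `E₁ ∘ E₂ = {(x,z) | ∃ y, (x,y) ∈ E₁ ∧ (y,z) ∈ E₂}`. -/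
def relComp {X : Type*} (E₁ E₂ : Set (X × X)) : Set (X × X) :=
  {p : X × X | ∃ y, (p.1, y) ∈ E₁ ∧ (y, p.2) ∈ E₂}

/-- A subset `B` is bounded for a coarse structure if `B × B` is an entourage. -/
def CoarseStruct.IsBoundedSet {X : Type*} (c : CoarseStruct X) (B : Set X) : Prop :=
  B ×ˢ B ∈ c.ents

/-- A coarse map sends entourages to entourages and preimages of bounded sets
are bounded. -/
def IsCoarseMap {X Y : Type*} (cX : CoarseStruct X) (cY : CoarseStruct Y)
    (φ : X → Y) : Prop :=
  (∀ E ∈ cX.ents, (fun p : X × X => (φ p.1, φ p.2)) '' E ∈ cY.ents) ∧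
  (∀ B : Set Y, cY.IsBoundedSet B → cX.IsBoundedSet (φ ⁻¹' B))

/-- Two maps are close if the image of the diagonal under `φ × ψ` is an entourage. -/
def Close {X Y : Type*} (cY : CoarseStruct Y) (φ ψ : X → Y) : Prop :=
  Set.range (fun x => (φ x, ψ x)) ∈ cY.ents

/-- Pushforward of a finitely supported measure `μ` along `f`. -/
noncomputable def pushf {Z : Type*} (f : Z → Z) (μ : Z → ℝ) : Z → ℝ :=
  fun w => ∑ᶠ z ∈ {z | f z = w}, μ z

open Function Set

theorem support_mul_add_mul_subset {α R : Type*} [NonUnitalNonAssocSemiring R]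
    (a b : R) (f g : α → R) :
    support (fun x => a * f x + b * g x) ⊆ support f ∪ support g :=
  (support_add _ _).trans
    (union_subset_union (support_mul_subset_right _ _) (support_mul_subset_right _ _))

theorem support_pushf_subset_image {Z : Type*} (f : Z → Z) (μ : Z → ℝ) :
    support (pushf f μ) ⊆ f '' support μ := by
  intro w hw
  obtain ⟨z, hz, hμz⟩ := exists_ne_zero_of_finsum_mem_ne_zero hw
  exact ⟨z, hμz, hz⟩

theorem support_pushf_consecutive_subset {Z : Type*} (H : Z → ℕ → Z) (j : ℕ) (a b : ℝ)
    (μ : Z → ℝ) :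
    support (fun w => a * pushf (fun z => H z j) μ w + b * pushf (fun z => H z (j+1)) μ w) ⊆
      uncurry H '' (support μ ×ˢ Icc j (j+1)) := by
  have slice_subset : ∀ k ∈ Icc j (j+1),
      (fun z => H z k) '' support μ ⊆ uncurry H '' (support μ ×ˢ Icc j (j+1)) := by
    rintro k hk _ ⟨z, hz, rfl⟩
    exact ⟨(z, k), ⟨hz, hk⟩, rfl⟩
  refine (support_mul_add_mul_subset _ _ _ _).trans (union_subset ?_ ?_)
  · exact (support_pushf_subset_image _ μ).trans (slice_subset j (by simp))
  · exact (support_pushf_subset_image _ μ).trans (slice_subset (j+1) (by simp))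

theorem image_uncurry_Icc_sq_subset {Z : Type*} (H : Z → ℕ → Z) {S : Set Z}
    {F : Set (Z × Z)} (hS : S ×ˢ S ⊆ F) (j : ℕ) :
    (uncurry H '' (S ×ˢ Icc j (j+1))) ×ˢ (uncurry H '' (S ×ˢ Icc j (j+1))) ⊆
      (fun p : (Z × ℕ) × (Z × ℕ) => (H p.1.1 p.1.2, H p.2.1 p.2.2)) ''
        {p : (Z × ℕ) × (Z × ℕ) | (p.1.1, p.2.1) ∈ F ∧
          p.1.2 ≤ p.2.2 + 1 ∧ p.2.2 ≤ p.1.2 + 1} := by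
  rintro ⟨_, _⟩ ⟨⟨⟨z₁, j₁⟩, ⟨hz₁, hj₁⟩, rfl⟩, ⟨⟨z₂, j₂⟩, ⟨hz₂, hj₂⟩, rfl⟩⟩
  exact ⟨((z₁, j₁), (z₂, j₂)), ⟨hS ⟨hz₁, hz₂⟩, by grind, by grind⟩, rfl⟩

theorem stmt12_general {Z : Type*} (cZ : CoarseStruct Z) (E : ℕ → Set (Z × Z))
    (hEmem : ∀ n, E n ∈ cZ.ents) (hEmono : Monotone E)
    (hEgen : ∀ F ∈ cZ.ents, ∃ n, F ⊆ E n)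
    (H : Z → ℕ → Z)
    (hHent : ∀ F ∈ cZ.ents, ∀ c : ℕ,
      (fun p : (Z × ℕ) × (Z × ℕ) => (H p.1.1 p.1.2, H p.2.1 p.2.2)) ''
        {p : (Z × ℕ) × (Z × ℕ) | (p.1.1, p.2.1) ∈ F ∧
          p.1.2 ≤ p.2.2 + c ∧ p.2.2 ≤ p.1.2 + c} ∈ cZ.ents) :
    ∀ n : ℕ, ∃ m : ℕ, n ≤ m ∧
      ∀ (j : ℕ) (s : ℝ), s ∈ Set.Icc (0:ℝ) 1 →
      ∀ μ : Z → ℝ, (Function.support μ).Finite → (∀ z, 0 ≤ μ z) → (∑ᶠ z, μ z = 1) →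
      Function.support μ ×ˢ Function.support μ ⊆ E n →
      (Function.support fun w =>
          (1 - s) * pushf (fun z => H z j) μ w + s * pushf (fun z => H z (j+1)) μ w) ×ˢ
        (Function.support fun w =>
          (1 - s) * pushf (fun z => H z j) μ w + s * pushf (fun z => H z (j+1)) μ w) ⊆
        E m := by
  intro n
  obtain ⟨m₀, hm₀⟩ := hEgen _ (hHent (E n) (hEmem n) 1)
  refine ⟨max n m₀, le_max_left _ _, fun j s _ μ _ _ _ hμ => ?_⟩
  have hsupp := support_pushf_consecutive_subset H j (1 - s) s μ
  calc _ ⊆ (uncurry H '' (support μ ×ˢ Icc j (j+1))) ×ˢ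
          (uncurry H '' (support μ ×ˢ Icc j (j+1))) := prod_mono hsupp hsupp
    _ ⊆ E m₀ := (image_uncurry_Icc_sq_subset H hμ j).trans hm₀
    _ ⊆ E (max n m₀) := hEmono (le_max_right _ _)

/-- Let `Z` be a countably generated discrete coarse space with increasing generating
entourages `E n`, and `H : Z × ℕ → Z` a coarse contraction to `pt` (it maps product
entourages to entourages, is the identity at time `0`, eventually collapses bounded
sets to `pt`, and fixes `pt`).  Writing `H_j μ` for the pushforward of a finitely
supported probability measure along `z ↦ H z j`, for every `n` there is `m ≥ n` such
that for all `j`, `s ∈ [0,1]` and `μ` with `supp μ × supp μ ⊆ E n`, the convex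
combination `(1-s)•H_j μ + s•H_{j+1} μ` lies in `P_{Z,m}`, i.e. its support square is
contained in `E m`. -/
theorem stmt12 {Z : Type*} (cZ : CoarseStruct Z) (E : ℕ → Set (Z × Z))
    (hEmem : ∀ n, E n ∈ cZ.ents) (hEmono : Monotone E)
    (hEgen : ∀ F ∈ cZ.ents, ∃ n, F ⊆ E n)
    (pt : Z) (H : Z → ℕ → Z)
    (hHent : ∀ F ∈ cZ.ents, ∀ c : ℕ,
      (fun p : (Z × ℕ) × (Z × ℕ) => (H p.1.1 p.1.2, H p.2.1 p.2.2)) ''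
        {p : (Z × ℕ) × (Z × ℕ) | (p.1.1, p.2.1) ∈ F ∧
          p.1.2 ≤ p.2.2 + c ∧ p.2.2 ≤ p.1.2 + c} ∈ cZ.ents)
    (hH0 : ∀ x, H x 0 = x)
    (hHbd : ∀ B : Set Z, cZ.IsBoundedSet B → ∃ N, ∀ x ∈ B, ∀ n ≥ N, H x n = pt)
    (hHpt : ∀ n, H pt n = pt) :
    ∀ n : ℕ, ∃ m : ℕ, n ≤ m ∧
      ∀ (j : ℕ) (s : ℝ), s ∈ Set.Icc (0:ℝ) 1 →
      ∀ μ : Z → ℝ, (Function.support μ).Finite → (∀ z, 0 ≤ μ z) → (∑ᶠ z, μ z = 1) →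
      Function.support μ ×ˢ Function.support μ ⊆ E n →
      (Function.support fun w =>
          (1 - s) * pushf (fun z => H z j) μ w + s * pushf (fun z => H z (j+1)) μ w) ×ˢ
        (Function.support fun w =>
          (1 - s) * pushf (fun z => H z j) μ w + s * pushf (fun z => H z (j+1)) μ w) ⊆
        E m :=
  stmt12_general cZ E hEmem hEmono hEgen H hHent
end

section
/- With H and Γ as above, and with another contraction H̃ to the same point pt (with associated map Γ̃), the maps Γ and Γ̃ are both homotopic, through maps [0,1] × X → X × X preserving the subset condition (one coordinate of Γ_s(t,x) is always x, and the boundary set [0,1]×{pt} ∪ {0,1}×X is sent into X×{pt} ∪ {pt}×X), to the map (t,x) ↦ (H(H̃(x,1−2t),1−2t), x) for t ≤ 1/2 and (t,x) ↦ (x, H(H̃(x,2t−1),2t−1)) for t ≥ 1/2. -/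
open Classical in
/-- The map `Γ(t,x) = (H(x,1-2t), x)` for `t ≤ 1/2` and `(x, H(x,2t-1))` for
`t ≥ 1/2`, built from a contraction `H`. -/
noncomputable def Gam {X : Type*} (H : X × ℝ → X) : ℝ × X → X × X :=
  fun p => if p.1 ≤ 1 / 2 then (H (p.2, 1 - 2 * p.1), p.2) else (p.2, H (p.2, 2 * p.1 - 1))

open Classical in
/-- The "mixed" map `Θ(t,x) = (H(H̃(x,1-2t),1-2t), x)` for `t ≤ 1/2` and
`(x, H(H̃(x,2t-1),2t-1))` for `t ≥ 1/2`. -/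
noncomputable def Theta {X : Type*} (H Ht : X × ℝ → X) : ℝ × X → X × X :=
  fun p => if p.1 ≤ 1 / 2 then (H (Ht (p.2, 1 - 2 * p.1), 1 - 2 * p.1), p.2)
    else (p.2, H (Ht (p.2, 2 * p.1 - 1), 2 * p.1 - 1))

/-! The homotopies are obtained by interpolating between contractions. For a contraction `K`
to `pt`, `Gam K` always keeps one coordinate equal to `x` and sends `[0,1] × {pt} ∪ {0,1} × X`
into the axes through `pt`; continuity across `t = 1/2` only needs `K (x, 0) = x`. Since
`Theta H H̃ = Gam (H ∘ H̃)` with `(H ∘ H̃)(x, s) = H (H̃ (x, s), s)`, it suffices to deform `H`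
into `H ∘ H̃` through `K_r(x, s) = H (H̃ (x, r s), s)`, and `H̃` into `H ∘ H̃` through
`K_r(x, s) = H (H̃ (x, s), r s)`; each `K_r` is again a contraction to `pt`. -/

open Set Function

theorem continuousOn_if_le {α β γ : Type*} [TopologicalSpace α] [LinearOrder β]
    [TopologicalSpace β] [OrderClosedTopology β] [TopologicalSpace γ] {s : Set α}
    {f g : α → β} [∀ a, Decidable (f a ≤ g a)] {f' g' : α → γ}
    (hf : Continuous f) (hg : Continuous g) (hf' : ContinuousOn f' (s ∩ {a | f a ≤ g a}))
    (hg' : ContinuousOn g' (s ∩ {a | g a ≤ f a})) (hfg : ∀ a ∈ s, f a = g a → f' a = g' a) :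
    ContinuousOn (fun a => if f a ≤ g a then f' a else g' a) s := by
  refine ContinuousOn.if (fun a ha => hfg a ha.1 (frontier_le_subset_eq hf hg ha.2)) ?_ ?_
  · rwa [(isClosed_le hf hg).closure_eq]
  · refine hg'.mono (inter_subset_inter_right s ?_)
    simpa only [not_le] using closure_lt_subset_le hg hf

section Gam

variable {X : Type*}

theorem Gam_fst_eq_self_or_snd_eq_self (K : X × ℝ → X) (t : ℝ) (x : X) :
    (Gam K (t, x)).1 = x ∨ (Gam K (t, x)).2 = x := by
  unfold Gam
  split_ifs <;> simp

theorem Gam_fst_eq_or_snd_eq_of_boundary {K : X × ℝ → X} {pt : X}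
    (hK1 : ∀ x, K (x, 1) = pt) (hKpt : ∀ s ∈ Icc (0 : ℝ) 1, K (pt, s) = pt)
    {t : ℝ} (ht : t ∈ Icc (0 : ℝ) 1) {x : X} (hx : x = pt ∨ t = 0 ∨ t = 1) :
    (Gam K (t, x)).1 = pt ∨ (Gam K (t, x)).2 = pt := by
  obtain ⟨ht0, ht1⟩ := ht
  unfold Gam
  split_ifs with h
  · rcases hx with rfl | rfl | rfl
    · exact .inl (hKpt _ ⟨by linarith, by linarith⟩)
    · exact .inl (by norm_num [hK1])
    · norm_num at h
  · rcases hx with rfl | rfl | rfl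
    · exact .inr (hKpt _ ⟨by linarith, by linarith⟩)
    · norm_num at h
    · exact .inr (by norm_num [hK1])

theorem Theta_eq_Gam (H Ht : X × ℝ → X) : Theta H Ht = Gam (fun p => H (Ht p, p.2)) := rfl

variable [TopologicalSpace X]

theorem continuousOn_Gam_family {P : Type*} [TopologicalSpace P] {S : Set P}
    {K : P → X × ℝ → X} (hK : ContinuousOn (uncurry K) (S ×ˢ univ ×ˢ Icc 0 1))
    (hK0 : ∀ p ∈ S, ∀ x, K p (x, 0) = x) :
    ContinuousOn (fun a : P × ℝ × X => Gam (K a.1) a.2) (S ×ˢ Icc 0 1 ×ˢ univ) := by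
  unfold Gam
  refine continuousOn_if_le (by fun_prop) continuous_const ?_ ?_ ?_
  · refine ContinuousOn.prodMk (hK.comp (f := fun a : P × ℝ × X => (a.1, a.2.2, 1 - 2 * a.2.1))
      (by fun_prop) ?_) (by fun_prop)
    rintro ⟨p, t, x⟩ ⟨⟨hp, ⟨ht0, -⟩, -⟩, ht⟩
    exact ⟨hp, mem_univ x, by simp only [mem_ofPred_eq] at ht; constructor <;> linarith⟩
  · refine ContinuousOn.prodMk (by fun_prop)
      (hK.comp (f := fun a : P × ℝ × X => (a.1, a.2.2, 2 * a.2.1 - 1)) (by fun_prop) ?_)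
    rintro ⟨p, t, x⟩ ⟨⟨hp, ⟨-, ht1⟩, -⟩, ht⟩
    exact ⟨hp, mem_univ x, by simp only [mem_ofPred_eq] at ht; constructor <;> linarith⟩
  · rintro ⟨p, t, x⟩ ⟨hp, -⟩ (rfl : t = 1 / 2)
    norm_num [hK0 p hp]

theorem continuousOn_comp_reparam {H G : X × ℝ → X}
    (hH : ContinuousOn H (univ ×ˢ Icc 0 1)) (hG : ContinuousOn G (univ ×ˢ Icc 0 1))
    {u v : ℝ × ℝ → ℝ} (hu : Continuous u) (hv : Continuous v)
    (huI : MapsTo u (Icc 0 1 ×ˢ Icc 0 1) (Icc 0 1))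
    (hvI : MapsTo v (Icc 0 1 ×ˢ Icc 0 1) (Icc 0 1)) :
    ContinuousOn (fun q : ℝ × X × ℝ => H (G (q.2.1, u (q.1, q.2.2)), v (q.1, q.2.2)))
      (Icc 0 1 ×ˢ univ ×ˢ Icc 0 1) := by
  have hrs : MapsTo (fun q : ℝ × X × ℝ => (q.1, q.2.2)) (Icc 0 1 ×ˢ univ ×ˢ Icc 0 1)
      (Icc 0 1 ×ˢ Icc 0 1) := fun _ hq => ⟨hq.1, hq.2.2⟩
  have hG' : ContinuousOn (fun q : ℝ × X × ℝ => G (q.2.1, u (q.1, q.2.2)))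
      (Icc 0 1 ×ˢ univ ×ˢ Icc 0 1) :=
    hG.comp (by fun_prop) fun _ hq => ⟨mem_univ _, huI (hrs hq)⟩
  exact hH.comp (hG'.prodMk (by fun_prop)) fun _ hq => ⟨mem_univ _, hvI (hrs hq)⟩

theorem exists_homotopy_Gam {pt : X} (K : ℝ → X × ℝ → X)
    (hK : ContinuousOn (uncurry K) (Icc 0 1 ×ˢ univ ×ˢ Icc 0 1))
    (hK0 : ∀ r ∈ Icc (0 : ℝ) 1, ∀ x, K r (x, 0) = x)
    (hK1 : ∀ r ∈ Icc (0 : ℝ) 1, ∀ x, K r (x, 1) = pt)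
    (hKpt : ∀ r ∈ Icc (0 : ℝ) 1, ∀ s ∈ Icc (0 : ℝ) 1, K r (pt, s) = pt) :
    ∃ F : ℝ × ℝ × X → X × X,
      ContinuousOn F (Icc (0 : ℝ) 1 ×ˢ Icc (0 : ℝ) 1 ×ˢ univ) ∧
      (∀ t x, F (0, t, x) = Gam (K 0) (t, x)) ∧
      (∀ t x, F (1, t, x) = Gam (K 1) (t, x)) ∧
      (∀ r ∈ Icc (0 : ℝ) 1, ∀ t ∈ Icc (0 : ℝ) 1, ∀ x : X,
        ((F (r, t, x)).1 = x ∨ (F (r, t, x)).2 = x) ∧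
        (x = pt ∨ t = 0 ∨ t = 1 → (F (r, t, x)).1 = pt ∨ (F (r, t, x)).2 = pt)) :=
  ⟨fun a => Gam (K a.1) a.2, continuousOn_Gam_family hK hK0, fun _ _ => rfl, fun _ _ => rfl,
    fun r hr t ht x => ⟨Gam_fst_eq_self_or_snd_eq_self (K r) t x,
      Gam_fst_eq_or_snd_eq_of_boundary (hK1 r hr) (hKpt r hr) ht⟩⟩

end Gam

/-- Given two contractions `H`, `H̃` of `X` to the same point `pt`, both `Γ` (built
from `H`) and `Γ̃` (built from `H̃`) are homotopic to the mixed map `Θ`, through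
homotopies `F` such that one coordinate of `F(r,(t,x))` is always `x` and the boundary
set `[0,1] × {pt} ∪ {0,1} × X` is sent into `X × {pt} ∪ {pt} × X`. -/
theorem stmt14 {X : Type*} [TopologicalSpace X] (pt : X) (H Ht : X × ℝ → X)
    (hHcont : ContinuousOn H (Set.univ ×ˢ Set.Icc (0:ℝ) 1))
    (hHtcont : ContinuousOn Ht (Set.univ ×ˢ Set.Icc (0:ℝ) 1))
    (hH0 : ∀ x, H (x, 0) = x) (hH1 : ∀ x, H (x, 1) = pt)
    (hHpt : ∀ t ∈ Set.Icc (0:ℝ) 1, H (pt, t) = pt)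
    (hHt0 : ∀ x, Ht (x, 0) = x) (hHt1 : ∀ x, Ht (x, 1) = pt)
    (hHtpt : ∀ t ∈ Set.Icc (0:ℝ) 1, Ht (pt, t) = pt) :
    (∃ F : ℝ × ℝ × X → X × X,
      ContinuousOn F (Set.Icc (0:ℝ) 1 ×ˢ Set.Icc (0:ℝ) 1 ×ˢ Set.univ) ∧
      (∀ t x, F (0, t, x) = Gam H (t, x)) ∧
      (∀ t x, F (1, t, x) = Theta H Ht (t, x)) ∧
      (∀ r ∈ Set.Icc (0:ℝ) 1, ∀ t ∈ Set.Icc (0:ℝ) 1, ∀ x : X,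
        ((F (r, t, x)).1 = x ∨ (F (r, t, x)).2 = x) ∧
        (x = pt ∨ t = 0 ∨ t = 1 →
          (F (r, t, x)).1 = pt ∨ (F (r, t, x)).2 = pt))) ∧
    (∃ F : ℝ × ℝ × X → X × X,
      ContinuousOn F (Set.Icc (0:ℝ) 1 ×ˢ Set.Icc (0:ℝ) 1 ×ˢ Set.univ) ∧
      (∀ t x, F (0, t, x) = Gam Ht (t, x)) ∧
      (∀ t x, F (1, t, x) = Theta H Ht (t, x)) ∧
      (∀ r ∈ Set.Icc (0:ℝ) 1, ∀ t ∈ Set.Icc (0:ℝ) 1, ∀ x : X,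
        ((F (r, t, x)).1 = x ∨ (F (r, t, x)).2 = x) ∧
        (x = pt ∨ t = 0 ∨ t = 1 →
          (F (r, t, x)).1 = pt ∨ (F (r, t, x)).2 = pt))) := by
  have hmul : MapsTo (fun q : ℝ × ℝ => q.1 * q.2) (Icc 0 1 ×ˢ Icc 0 1) (Icc 0 1) :=
    fun _ hq => unitInterval.mul_mem hq.1 hq.2
  have hsnd : MapsTo (fun q : ℝ × ℝ => q.2) (Icc 0 1 ×ˢ Icc 0 1) (Icc 0 1) := fun _ hq => hq.2
  constructor
  · have h := exists_homotopy_Gam (pt := pt) (fun r p => H (Ht (p.1, r * p.2), p.2))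
      (continuousOn_comp_reparam hHcont hHtcont (by fun_prop) (by fun_prop) hmul hsnd)
      (fun _ _ x => by rw [mul_zero, hHt0, hH0]) (fun _ _ _ => hH1 _)
      (fun r hr s hs => by rw [hHtpt _ (unitInterval.mul_mem hr hs), hHpt s hs])
    simpa only [zero_mul, one_mul, hHt0, Theta_eq_Gam] using h
  · have h := exists_homotopy_Gam (pt := pt) (fun r p => H (Ht (p.1, p.2), r * p.2))
      (continuousOn_comp_reparam hHcont hHtcont (by fun_prop) (by fun_prop) hsnd hmul)
      (fun _ _ x => by rw [hHt0, mul_zero, hH0]) (fun r hr x => by rw [hHt1, mul_one, hHpt r hr])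
      (fun r hr s hs => by rw [hHtpt s hs, hHpt _ (unitInterval.mul_mem hr hs)])
    simpa only [zero_mul, one_mul, hH0, Theta_eq_Gam] using h
end

section
/- Let X be a coarsely contractible coarse space with coarse contraction H : X × ℕ → X to pt. Then the map (x,n) ↦ (H(x,n), x), restricted to the set S = {(x,n) ∈ X × ℕ : n ≤ N_{\{x\}}} (where N_{\{x\}} is minimal with H(x,m) = pt for all m ≥ N_{\{x\}}), is a coarse map from S (with the subspace coarse structure of the product X × ℕ) to X × X: it maps entourages to entourages and preimages of bounded sets are bounded. -/
/-- Entourages of the product coarse structure built from two families of entourages: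
subsets of a product `F ×' G` of entourages. -/
def prodEnts {X Y : Type*} (eX : Set (Set (X × X))) (eY : Set (Set (Y × Y))) :
    Set (Set ((X × Y) × (X × Y))) :=
  {E | ∃ F ∈ eX, ∃ G ∈ eY,
    ∀ p ∈ E, (p.1.1, p.2.1) ∈ F ∧ (p.1.2, p.2.2) ∈ G}

/-- Entourages of the metric coarse structure on `ℕ`. -/
def natEnts : Set (Set (ℕ × ℕ)) :=
  {G | ∃ c : ℕ, ∀ p ∈ G, p.1 ≤ p.2 + c ∧ p.2 ≤ p.1 + c}

/-!
The second coordinate of `(x, n) ↦ (H x n, x)` is the projection to `X` and the first is `H`,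
so entourages go to entourages because `H` is coarse. For properness, a bounded `B ⊆ X × X` has
bounded second projection `B₂`; the contraction collapses `B₂` to `pt` after some uniform time
`N`, so by minimality `Nf x ≤ N` on `B₂`, and the points of `S` over `B₂` have their
`ℕ`-coordinate in `[0, N]`.
-/

section

open Set

variable {X Y : Type*}

theorem CoarseStruct.IsBoundedSet.subset {c : CoarseStruct X} {B B' : Set X}
    (hB : c.IsBoundedSet B) (h : B' ⊆ B) : c.IsBoundedSet B' :=
  c.subset_mem _ hB _ (prod_mono h h)

theorem CoarseStruct.image_fst_mem_of_mem_prodEnts (c : CoarseStruct X)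
    {eY : Set (Set (Y × Y))} {E : Set ((X × Y) × (X × Y))} (hE : E ∈ prodEnts c.ents eY) :
    (fun p : (X × Y) × (X × Y) => (p.1.1, p.2.1)) '' E ∈ c.ents := by
  obtain ⟨F, hF, _, _, hFG⟩ := hE
  exact c.subset_mem F hF _ (by rintro _ ⟨p, hp, rfl⟩; exact (hFG p hp).1)

theorem CoarseStruct.isBoundedSet_image_snd_of_prod_mem_prodEnts (c : CoarseStruct Y)
    {eX : Set (Set (X × X))} {B : Set (X × Y)} (hB : B ×ˢ B ∈ prodEnts eX c.ents) :
    c.IsBoundedSet (Prod.snd '' B) := by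
  obtain ⟨_, _, G, hG, hFG⟩ := hB
  refine c.subset_mem G hG _ ?_
  rintro ⟨_, _⟩ ⟨⟨u, hu, rfl⟩, ⟨v, hv, rfl⟩⟩
  exact (hFG (u, v) ⟨hu, hv⟩).2

theorem map_mem_prodEnts {A : Type*} {eX : Set (Set (X × X))} {eY : Set (Set (Y × Y))}
    {E : Set (A × A)} (f : A → X) (g : A → Y)
    (hf : (fun p : A × A => (f p.1, f p.2)) '' E ∈ eX)
    (hg : (fun p : A × A => (g p.1, g p.2)) '' E ∈ eY) :
    (fun p : A × A => ((f p.1, g p.1), (f p.2, g p.2))) '' E ∈ prodEnts eX eY := by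
  refine ⟨_, hf, _, hg, ?_⟩
  rintro _ ⟨p, hp, rfl⟩
  exact ⟨⟨p, hp, rfl⟩, ⟨p, hp, rfl⟩⟩

theorem prod_mem_prodEnts {eX : Set (Set (X × X))} {eY : Set (Set (Y × Y))} {A : Set (X × Y)}
    (hX : (Prod.fst '' A) ×ˢ (Prod.fst '' A) ∈ eX)
    (hY : (Prod.snd '' A) ×ˢ (Prod.snd '' A) ∈ eY) :
    A ×ˢ A ∈ prodEnts eX eY := by
  refine ⟨_, hX, _, hY, ?_⟩
  rintro ⟨a, b⟩ ⟨ha, hb⟩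
  exact ⟨⟨mem_image_of_mem _ ha, mem_image_of_mem _ hb⟩,
    ⟨mem_image_of_mem _ ha, mem_image_of_mem _ hb⟩⟩

theorem prod_mem_natEnts_of_subset_Iic {s : Set ℕ} {N : ℕ} (hs : s ⊆ Iic N) :
    s ×ˢ s ∈ natEnts := by
  refine ⟨N, ?_⟩
  rintro ⟨m, n⟩ ⟨hm, hn⟩
  exact ⟨(hs hm).trans (Nat.le_add_left N n), (hs hn).trans (Nat.le_add_left N m)⟩

end

theorem stmt16_general {X : Type*} (cX : CoarseStruct X) (pt : X) (H : X → ℕ → X)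
    (hHent : ∀ E ∈ prodEnts cX.ents natEnts,
      (fun p : (X × ℕ) × (X × ℕ) => (H p.1.1 p.1.2, H p.2.1 p.2.2)) '' E ∈ cX.ents)
    (hHbd : ∀ B : Set X, cX.IsBoundedSet B → ∃ N, ∀ x ∈ B, ∀ n ≥ N, H x n = pt)
    (Nf : X → ℕ)
    (hNf : ∀ x, (∀ m ≥ Nf x, H x m = pt) ∧
      ∀ N' : ℕ, (∀ m ≥ N', H x m = pt) → Nf x ≤ N')
    (S : Set (X × ℕ)) (hS : S = {p : X × ℕ | p.2 ≤ Nf p.1}) :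
    (∀ E ∈ prodEnts cX.ents natEnts, E ⊆ S ×ˢ S →
      (fun p : (X × ℕ) × (X × ℕ) => ((H p.1.1 p.1.2, p.1.1), (H p.2.1 p.2.2, p.2.1)))
          '' E ∈ prodEnts cX.ents cX.ents) ∧
    (∀ B : Set (X × X), B ×ˢ B ∈ prodEnts cX.ents cX.ents →
      (((fun p : X × ℕ => (H p.1 p.2, p.1)) ⁻¹' B ∩ S) ×ˢ
        ((fun p : X × ℕ => (H p.1 p.2, p.1)) ⁻¹' B ∩ S)) ∈ prodEnts cX.ents natEnts) := by
  subst hS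
  refine ⟨fun E hE _ => map_mem_prodEnts (fun a => H a.1 a.2) Prod.fst (hHent E hE)
    (cX.image_fst_mem_of_mem_prodEnts hE), fun B hB => ?_⟩
  have hB₂ := cX.isBoundedSet_image_snd_of_prod_mem_prodEnts hB
  obtain ⟨N, hN⟩ := hHbd _ hB₂
  apply prod_mem_prodEnts
  · exact hB₂.subset (by rintro _ ⟨_, ⟨hx, -⟩, rfl⟩; exact ⟨_, hx, rfl⟩)
  · refine prod_mem_natEnts_of_subset_Iic (N := N) ?_
    rintro _ ⟨⟨x, n⟩, ⟨hx, hn⟩, rfl⟩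
    exact hn.trans ((hNf x).2 N (hN x ⟨_, hx, rfl⟩))

/-- Let `H : X × ℕ → X` be a coarse contraction of a coarse space `X` to `pt`, and let
`Nf x` be minimal with `H (x, m) = pt` for all `m ≥ Nf x`.  Then `(x,n) ↦ (H x n, x)`,
restricted to `S = {(x,n) | n ≤ Nf x}` with the subspace coarse structure of the
product `X × ℕ`, is a coarse map to `X × X`: it maps entourages to entourages and
preimages of bounded sets are bounded. -/
theorem stmt16 {X : Type*} (cX : CoarseStruct X) (pt : X) (H : X → ℕ → X)
    (hHent : ∀ E ∈ prodEnts cX.ents natEnts,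
      (fun p : (X × ℕ) × (X × ℕ) => (H p.1.1 p.1.2, H p.2.1 p.2.2)) '' E ∈ cX.ents)
    (hH0 : ∀ x, H x 0 = x)
    (hHbd : ∀ B : Set X, cX.IsBoundedSet B → ∃ N, ∀ x ∈ B, ∀ n ≥ N, H x n = pt)
    (hHpt : ∀ n, H pt n = pt)
    (Nf : X → ℕ)
    (hNf : ∀ x, (∀ m ≥ Nf x, H x m = pt) ∧
      ∀ N' : ℕ, (∀ m ≥ N', H x m = pt) → Nf x ≤ N')
    (S : Set (X × ℕ)) (hS : S = {p : X × ℕ | p.2 ≤ Nf p.1}) :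
    (∀ E ∈ prodEnts cX.ents natEnts, E ⊆ S ×ˢ S →
      (fun p : (X × ℕ) × (X × ℕ) => ((H p.1.1 p.1.2, p.1.1), (H p.2.1 p.2.2, p.2.1)))
          '' E ∈ prodEnts cX.ents cX.ents) ∧
    (∀ B : Set (X × X), B ×ˢ B ∈ prodEnts cX.ents cX.ents →
      (((fun p : X × ℕ => (H p.1 p.2, p.1)) ⁻¹' B ∩ S) ×ˢ
        ((fun p : X × ℕ => (H p.1 p.2, p.1)) ⁻¹' B ∩ S)) ∈ prodEnts cX.ents natEnts) :=
  stmt16_general cX pt H hHent hHbd Nf hNf S hS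
end
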